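/- Let (S, X, T) be discrete random variables with finite ranges and joint distribution P_{S,X,T}. Then there exist a probability space carrying random variables (S', X', T', Y) with finite ranges such that (S', X', T') has the same joint distribution as (S, X, T), I(Y;S') = 0, H(T'|Y,S') = 0, I(X';Y|S',T') ≤ H(X|S,T), and I(Y;T'|S') = H(T|S). -/

import Mathlib

open MeasureTheory ProbabilityTheory
open scoped ENNReal

/-- Shannon entropy (base 2) of a finitely-valued random variable `X` on `(Ω, μ)`. -/
noncomputable def entH {Ω : Type*} [MeasurableSpace Ω] (μ : Measure Ω)
    {α : Type*} [Fintype α] (X : Ω → α) : ℝ :=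
  -∑ a : α, ((μ (X ⁻¹' {a})).toReal * Real.logb 2 (μ (X ⁻¹' {a})).toReal)

/-- Conditional entropy `H(X | Y)` (base 2). -/
noncomputable def condEntH {Ω : Type*} [MeasurableSpace Ω] (μ : Measure Ω)
    {α β : Type*} [Fintype α] [Fintype β] (X : Ω → α) (Y : Ω → β) : ℝ :=
  entH μ (fun ω => (X ω, Y ω)) - entH μ Y

/-- Mutual information `I(X ; Y)` (base 2). -/
noncomputable def mutInf {Ω : Type*} [MeasurableSpace Ω] (μ : Measure Ω)
    {α β : Type*} [Fintype α] [Fintype β] (X : Ω → α) (Y : Ω → β) : ℝ :=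
  entH μ X + entH μ Y - entH μ (fun ω => (X ω, Y ω))

/-- Conditional mutual information `I(X ; Y | Z)` (base 2). -/
noncomputable def condMutInf {Ω : Type*} [MeasurableSpace Ω] (μ : Measure Ω)
    {α β γ : Type*} [Fintype α] [Fintype β] [Fintype γ]
    (X : Ω → α) (Y : Ω → β) (Z : Ω → γ) : ℝ :=
  condEntH μ X Z + condEntH μ Y Z - condEntH μ (fun ω => (X ω, Y ω)) Z

section AuxLemmas

open Finset
open scoped ENNReal

variable {Ω : Type*} [MeasurableSpace Ω] {μ : Measure Ω}

lemma measure_eq_sum_fiber {β : Type*} [Fintype β] [MeasurableSpace β]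
    [MeasurableSingletonClass β] {U : Ω → β} (hU : Measurable U)
    {s : Set Ω} (hs : MeasurableSet s) :
    μ s = ∑ b : β, μ (s ∩ U ⁻¹' {b}) := by
  classical
  have hset : s = ⋃ b : β, s ∩ U ⁻¹' {b} := by ext ω; simp
  have hdisj : Pairwise (Function.onFun Disjoint fun b : β => s ∩ U ⁻¹' {b}) := by
    intro i j hij
    simp only [Function.onFun, Set.disjoint_left]
    rintro ω ⟨-, hi⟩ ⟨-, hj⟩
    simp only [Set.mem_preimage, Set.mem_singleton_iff] at hi hj
    exact hij (hi ▸ hj)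
  calc μ s = μ (⋃ b : β, s ∩ U ⁻¹' {b}) := by rw [← hset]
    _ = ∑' b : β, μ (s ∩ U ⁻¹' {b}) :=
        measure_iUnion hdisj fun b => hs.inter (hU (measurableSet_singleton b))
    _ = ∑ b : β, μ (s ∩ U ⁻¹' {b}) := tsum_fintype _

lemma sum_toReal_fiber {β : Type*} [Fintype β] [MeasurableSpace β]
    [MeasurableSingletonClass β] {U : Ω → β} (hU : Measurable U) [IsFiniteMeasure μ]
    {s : Set Ω} (hs : MeasurableSet s) :
    (μ s).toReal = ∑ b : β, (μ (s ∩ U ⁻¹' {b})).toReal := by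
  rw [← ENNReal.toReal_sum fun a _ => measure_ne_top μ _, ← measure_eq_sum_fiber hU hs]

lemma entH_comp_inj {α β : Type*} [Fintype α] [Fintype β] {f : α → β}
    (hf : Function.Injective f) (W : Ω → α) :
    entH μ (fun ω => f (W ω)) = entH μ W := by
  classical
  unfold entH
  congr 1
  rw [← Finset.sum_subset (Finset.subset_univ (Finset.univ.image f))
    (fun b _ hb => by
      have : (fun ω => f (W ω)) ⁻¹' {b} = ∅ := by
        ext ω
        simp only [Set.mem_preimage, Set.mem_singleton_iff, Set.mem_empty_iff_false, iff_false]
        intro h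
        exact hb (Finset.mem_image.mpr ⟨W ω, Finset.mem_univ _, h⟩)
      simp [this])]
  rw [Finset.sum_image (fun a _ a' _ h => hf h)]
  apply Finset.sum_congr rfl
  intro a _
  have : (fun ω => f (W ω)) ⁻¹' {f a} = W ⁻¹' {a} := by
    ext ω; simp [hf.eq_iff]
  rw [this]

lemma entH_map {Ω' : Type*} [MeasurableSpace Ω'] {μ' : Measure Ω'}
    {α : Type*} [Fintype α] [MeasurableSpace α] [MeasurableSingletonClass α]
    {W : Ω → α} {W' : Ω' → α} (hW : Measurable W) (hW' : Measurable W')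
    (h : μ.map W = μ'.map W') : entH μ W = entH μ' W' := by
  unfold entH
  congr 1
  apply Finset.sum_congr rfl
  intro a _
  have : μ (W ⁻¹' {a}) = μ' (W' ⁻¹' {a}) := by
    rw [← Measure.map_apply hW (measurableSet_singleton a),
      ← Measure.map_apply hW' (measurableSet_singleton a), h]
  rw [this]

/-- Entropy of an independent pair splits. -/
lemma entH_add_of_indep [IsProbabilityMeasure μ]
    {α β : Type*} [Fintype α] [Fintype β]
    [MeasurableSpace α] [MeasurableSingletonClass α]
    [MeasurableSpace β] [MeasurableSingletonClass β]
    {A : Ω → α} {B : Ω → β} (hA : Measurable A) (hB : Measurable B)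
    (hfact : ∀ a b, μ ((fun ω => (A ω, B ω)) ⁻¹' {(a, b)}) = μ (A ⁻¹' {a}) * μ (B ⁻¹' {b})) :
    entH μ (fun ω => (A ω, B ω)) = entH μ A + entH μ B := by
  classical
  set pa : α → ℝ := fun a => (μ (A ⁻¹' {a})).toReal with hpa
  set pb : β → ℝ := fun b => (μ (B ⁻¹' {b})).toReal with hpb
  have hab : ∀ a b, (μ ((fun ω => (A ω, B ω)) ⁻¹' {(a, b)})).toReal = pa a * pb b := by
    intro a b; rw [hfact]; exact ENNReal.toReal_mul
  have hsa : ∑ a, pa a = 1 := by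
    have h1 := sum_toReal_fiber (μ := μ) hA MeasurableSet.univ
    simp only [Set.univ_inter, measure_univ, ENNReal.toReal_one] at h1
    exact h1.symm
  have hsb : ∑ b, pb b = 1 := by
    have h1 := sum_toReal_fiber (μ := μ) hB MeasurableSet.univ
    simp only [Set.univ_inter, measure_univ, ENNReal.toReal_one] at h1
    exact h1.symm
  unfold entH
  rw [Fintype.sum_prod_type]
  have step : ∀ a : α, ∑ b, ((μ ((fun ω => (A ω, B ω)) ⁻¹' {(a, b)})).toReal *
      Real.logb 2 (μ ((fun ω => (A ω, B ω)) ⁻¹' {(a, b)})).toReal)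
      = ∑ b, (pb b * (pa a * Real.logb 2 (pa a)) + pa a * (pb b * Real.logb 2 (pb b))) := by
    intro a
    apply Finset.sum_congr rfl
    intro b _
    rw [hab a b]
    rcases eq_or_ne (pa a) 0 with h | h
    · simp [h]
    rcases eq_or_ne (pb b) 0 with h' | h'
    · simp [h']
    rw [Real.logb_mul h h']
    ring
  rw [Finset.sum_congr rfl fun a _ => step a]
  have e1 : ∑ a : α, ∑ b : β,
      (pb b * (pa a * Real.logb 2 (pa a)) + pa a * (pb b * Real.logb 2 (pb b)))
      = ∑ a, pa a * Real.logb 2 (pa a) + ∑ b, pb b * Real.logb 2 (pb b) := by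
    have inner : ∀ a : α, ∑ b : β,
        (pb b * (pa a * Real.logb 2 (pa a)) + pa a * (pb b * Real.logb 2 (pb b)))
        = pa a * Real.logb 2 (pa a) + pa a * (∑ b, pb b * Real.logb 2 (pb b)) := by
      intro a
      rw [Finset.sum_add_distrib, ← Finset.sum_mul, hsb, one_mul, ← Finset.mul_sum]
    rw [Finset.sum_congr rfl fun a _ => inner a, Finset.sum_add_distrib, ← Finset.sum_mul, hsa,
      one_mul]
  rw [e1]
  ring

/-- Conditional entropy is nonnegative: `H(Z) ≤ H(A,Z)`. -/
lemma entH_le_pair [IsFiniteMeasure μ]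
    {α γ : Type*} [Fintype α] [Fintype γ]
    [MeasurableSpace α] [MeasurableSingletonClass α]
    [MeasurableSpace γ] [MeasurableSingletonClass γ]
    {A : Ω → α} {Z : Ω → γ} (hA : Measurable A) (hZ : Measurable Z) :
    entH μ Z ≤ entH μ (fun ω => (A ω, Z ω)) := by
  classical
  unfold entH
  apply neg_le_neg
  rw [Fintype.sum_prod_type, Finset.sum_comm]
  apply Finset.sum_le_sum
  intro z _
  set p : α → ℝ := fun a => (μ ((fun ω => (A ω, Z ω)) ⁻¹' {(a, z)})).toReal with hp
  have hm : (μ (Z ⁻¹' {z})).toReal = ∑ a, p a := by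
    rw [sum_toReal_fiber (μ := μ) hA (hZ (measurableSet_singleton z))]
    apply Finset.sum_congr rfl
    intro a _
    have hset : Z ⁻¹' {z} ∩ A ⁻¹' {a} = (fun ω => (A ω, Z ω)) ⁻¹' {(a, z)} := by
      ext ω; simp [Prod.ext_iff, and_comm]
    rw [hset]
  have hple : ∀ a, p a ≤ (μ (Z ⁻¹' {z})).toReal := by
    intro a
    rw [hm]
    exact Finset.single_le_sum (f := p) (fun a _ => ENNReal.toReal_nonneg) (Finset.mem_univ a)
  calc ∑ a, p a * Real.logb 2 (p a)
      ≤ ∑ a, p a * Real.logb 2 (μ (Z ⁻¹' {z})).toReal := by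
        apply Finset.sum_le_sum
        intro a _
        rcases eq_or_ne (p a) 0 with h | h
        · simp [h]
        have hpos : 0 < p a := lt_of_le_of_ne ENNReal.toReal_nonneg (Ne.symm h)
        exact mul_le_mul_of_nonneg_left
          (Real.logb_le_logb_of_le one_lt_two hpos (hple a)) hpos.le
    _ = (μ (Z ⁻¹' {z})).toReal * Real.logb 2 (μ (Z ⁻¹' {z})).toReal := by
        rw [← Finset.sum_mul, ← hm]

/-- Conditional independence splits joint entropy: `H(A,B,C) + H(C) = H(A,C) + H(B,C)`. -/
lemma entH_condIndep [IsFiniteMeasure μ]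
    {α β γ : Type*} [Fintype α] [Fintype β] [Fintype γ]
    [MeasurableSpace α] [MeasurableSingletonClass α]
    [MeasurableSpace β] [MeasurableSingletonClass β]
    [MeasurableSpace γ] [MeasurableSingletonClass γ]
    {A : Ω → α} {B : Ω → β} {C : Ω → γ}
    (hA : Measurable A) (hB : Measurable B) (hC : Measurable C)
    (hfact : ∀ a b c, μ ((fun ω => (A ω, B ω, C ω)) ⁻¹' {(a, b, c)}) * μ (C ⁻¹' {c})
      = μ ((fun ω => (A ω, C ω)) ⁻¹' {(a, c)}) * μ ((fun ω => (B ω, C ω)) ⁻¹' {(b, c)})) :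
    entH μ (fun ω => (A ω, B ω, C ω)) + entH μ C
      = entH μ (fun ω => (A ω, C ω)) + entH μ (fun ω => (B ω, C ω)) := by
  classical
  set p : α → β → γ → ℝ :=
    fun a b c => (μ ((fun ω => (A ω, B ω, C ω)) ⁻¹' {(a, b, c)})).toReal with hpdef
  set pac : α → γ → ℝ := fun a c => (μ ((fun ω => (A ω, C ω)) ⁻¹' {(a, c)})).toReal with hpac
  set pbc : β → γ → ℝ := fun b c => (μ ((fun ω => (B ω, C ω)) ⁻¹' {(b, c)})).toReal with hpbc
  set pc : γ → ℝ := fun c => (μ (C ⁻¹' {c})).toReal with hpc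
  have hnn : ∀ a b c, 0 ≤ p a b c := fun _ _ _ => ENNReal.toReal_nonneg
  have m1 : ∀ a c, pac a c = ∑ b, p a b c := by
    intro a c
    rw [hpac]
    simp only
    rw [sum_toReal_fiber (μ := μ) hB ((hA.prodMk hC) (measurableSet_singleton (a, c)))]
    apply Finset.sum_congr rfl
    intro b _
    have hset : (fun ω => (A ω, C ω)) ⁻¹' {(a, c)} ∩ B ⁻¹' {b}
        = (fun ω => (A ω, B ω, C ω)) ⁻¹' {(a, b, c)} := by
      ext ω; simp only [Set.mem_inter_iff, Set.mem_preimage, Set.mem_singleton_iff,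
        Prod.ext_iff]; tauto
    rw [hset]
  have m2 : ∀ b c, pbc b c = ∑ a, p a b c := by
    intro b c
    rw [hpbc]
    simp only
    rw [sum_toReal_fiber (μ := μ) hA ((hB.prodMk hC) (measurableSet_singleton (b, c)))]
    apply Finset.sum_congr rfl
    intro a _
    have hset : (fun ω => (B ω, C ω)) ⁻¹' {(b, c)} ∩ A ⁻¹' {a}
        = (fun ω => (A ω, B ω, C ω)) ⁻¹' {(a, b, c)} := by
      ext ω; simp only [Set.mem_inter_iff, Set.mem_preimage, Set.mem_singleton_iff,
        Prod.ext_iff]; tauto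
    rw [hset]
  have m3 : ∀ c, pc c = ∑ a, pac a c := by
    intro c
    rw [hpc]
    simp only
    rw [sum_toReal_fiber (μ := μ) hA (hC (measurableSet_singleton c))]
    apply Finset.sum_congr rfl
    intro a _
    have hset : C ⁻¹' {c} ∩ A ⁻¹' {a} = (fun ω => (A ω, C ω)) ⁻¹' {(a, c)} := by
      ext ω; simp only [Set.mem_inter_iff, Set.mem_preimage, Set.mem_singleton_iff,
        Prod.ext_iff]; tauto
    rw [hset]
  have hfact' : ∀ a b c, p a b c * pc c = pac a c * pbc b c := by
    intro a b c
    rw [hpdef, hpc, hpac, hpbc]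
    simp only
    rw [← ENNReal.toReal_mul, ← ENNReal.toReal_mul, hfact]
  have hterm : ∀ a b c, p a b c * Real.logb 2 (p a b c) + p a b c * Real.logb 2 (pc c)
      = p a b c * Real.logb 2 (pac a c) + p a b c * Real.logb 2 (pbc b c) := by
    intro a b c
    rcases eq_or_ne (p a b c) 0 with h | h
    · simp [h]
    have hppos : 0 < p a b c := lt_of_le_of_ne (hnn a b c) (Ne.symm h)
    have hacpos : 0 < pac a c := lt_of_lt_of_le hppos (by
      rw [m1 a c]
      exact Finset.single_le_sum (f := fun b => p a b c) (fun b _ => hnn a b c)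
        (Finset.mem_univ b))
    have hbcpos : 0 < pbc b c := lt_of_lt_of_le hppos (by
      rw [m2 b c]
      exact Finset.single_le_sum (f := fun a => p a b c) (fun a _ => hnn a b c)
        (Finset.mem_univ a))
    have hcpos : 0 < pc c := lt_of_lt_of_le hacpos (by
      rw [m3 c]
      exact Finset.single_le_sum (f := fun a => pac a c)
        (fun a _ => ENNReal.toReal_nonneg) (Finset.mem_univ a))
    have hlog : Real.logb 2 (p a b c) + Real.logb 2 (pc c)
        = Real.logb 2 (pac a c) + Real.logb 2 (pbc b c) := by
      have h1 : Real.logb 2 (p a b c * pc c) = Real.logb 2 (pac a c * pbc b c) := by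
        rw [hfact' a b c]
      rwa [Real.logb_mul h hcpos.ne', Real.logb_mul hacpos.ne' hbcpos.ne'] at h1
    nlinarith [hlog]
  have eABC : entH μ (fun ω => (A ω, B ω, C ω))
      = -∑ a, ∑ b, ∑ c, p a b c * Real.logb 2 (p a b c) := by
    unfold entH
    rw [Fintype.sum_prod_type]
    congr 1
    apply Finset.sum_congr rfl
    intro a _
    rw [Fintype.sum_prod_type]
  have eAC : entH μ (fun ω => (A ω, C ω))
      = -∑ a, ∑ c, pac a c * Real.logb 2 (pac a c) := by
    unfold entH
    rw [Fintype.sum_prod_type]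
  have eBC : entH μ (fun ω => (B ω, C ω))
      = -∑ b, ∑ c, pbc b c * Real.logb 2 (pbc b c) := by
    unfold entH
    rw [Fintype.sum_prod_type]
  have eC : entH μ C = -∑ c, pc c * Real.logb 2 (pc c) := rfl
  rw [eABC, eAC, eBC, eC]
  have s1 : ∑ a, ∑ b, ∑ c, p a b c * Real.logb 2 (pac a c)
      = ∑ a, ∑ c, pac a c * Real.logb 2 (pac a c) := by
    apply Finset.sum_congr rfl
    intro a _
    rw [Finset.sum_comm]
    apply Finset.sum_congr rfl
    intro c _
    rw [← Finset.sum_mul, ← m1]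
  have s2 : ∑ a, ∑ b, ∑ c, p a b c * Real.logb 2 (pbc b c)
      = ∑ b, ∑ c, pbc b c * Real.logb 2 (pbc b c) := by
    rw [Finset.sum_comm]
    apply Finset.sum_congr rfl
    intro b _
    rw [Finset.sum_comm]
    apply Finset.sum_congr rfl
    intro c _
    rw [← Finset.sum_mul, ← m2]
  have s3 : ∑ a, ∑ b, ∑ c, p a b c * Real.logb 2 (pc c)
      = ∑ c, pc c * Real.logb 2 (pc c) := by
    have swap : ∑ a, ∑ b, ∑ c, p a b c * Real.logb 2 (pc c)
        = ∑ c, ∑ a, ∑ b, p a b c * Real.logb 2 (pc c) :=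
      calc ∑ a, ∑ b, ∑ c, p a b c * Real.logb 2 (pc c)
          = ∑ a, ∑ c, ∑ b, p a b c * Real.logb 2 (pc c) :=
            Finset.sum_congr rfl fun a _ => Finset.sum_comm
        _ = ∑ c, ∑ a, ∑ b, p a b c * Real.logb 2 (pc c) := Finset.sum_comm
    rw [swap]
    apply Finset.sum_congr rfl
    intro c _
    have hh : ∀ a, ∑ b, p a b c * Real.logb 2 (pc c) = (∑ b, p a b c) * Real.logb 2 (pc c) :=
      fun a => (Finset.sum_mul _ _ _).symm
    rw [Finset.sum_congr rfl fun a _ => hh a, ← Finset.sum_mul]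
    congr 1
    rw [m3]
    apply Finset.sum_congr rfl
    intro a _
    rw [m1]
  have main : ∑ a, ∑ b, ∑ c, p a b c * Real.logb 2 (p a b c)
        + ∑ a, ∑ b, ∑ c, p a b c * Real.logb 2 (pc c)
      = ∑ a, ∑ b, ∑ c, p a b c * Real.logb 2 (pac a c)
        + ∑ a, ∑ b, ∑ c, p a b c * Real.logb 2 (pbc b c) := by
    rw [← Finset.sum_add_distrib, ← Finset.sum_add_distrib]
    apply Finset.sum_congr rfl
    intro a _
    rw [← Finset.sum_add_distrib, ← Finset.sum_add_distrib]
    apply Finset.sum_congr rfl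
    intro b _
    rw [← Finset.sum_add_distrib, ← Finset.sum_add_distrib]
    exact Finset.sum_congr rfl fun c _ => hterm a b c
  rw [s1, s2, s3] at main
  linarith [main]

end AuxLemmas

section PiLemmas

open Finset
open scoped ENNReal

variable {𝒮 𝒯 : Type*} [Fintype 𝒮] [Fintype 𝒯]

lemma sum_pi_prod [DecidableEq 𝒮] (d : 𝒮 → 𝒯 → ℝ≥0∞) :
    ∑ h : 𝒮 → 𝒯, ∏ s : 𝒮, d s (h s) = ∏ s : 𝒮, ∑ t : 𝒯, d s t := by
  rw [Finset.prod_univ_sum]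
  rw [Fintype.piFinset_univ]

lemma sum_pi_prod_constrained [DecidableEq 𝒮] [DecidableEq 𝒯]
    (c : 𝒮 → 𝒯 → ℝ≥0∞) (s₀ : 𝒮) (t₀ : 𝒯) (G : 𝒮 → 𝒯) :
    ∑ h : 𝒮 → 𝒯, (if (fun s => if s = s₀ then t₀ else h s) = G
        then ∏ s : 𝒮, c s (h s) else 0)
      = if G s₀ = t₀ then ∏ s : 𝒮, (if s = s₀ then ∑ τ : 𝒯, c s₀ τ else c s (G s)) else 0 := by
  classical
  set d : 𝒮 → 𝒯 → ℝ≥0∞ := fun s τ =>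
    if s = s₀ then (if G s₀ = t₀ then c s₀ τ else 0) else (if τ = G s then c s τ else 0)
    with hd
  have hterm : ∀ h : 𝒮 → 𝒯,
      (if (fun s => if s = s₀ then t₀ else h s) = G then ∏ s : 𝒮, c s (h s) else 0)
        = ∏ s : 𝒮, d s (h s) := by
    intro h
    by_cases hc : (fun s => if s = s₀ then t₀ else h s) = G
    · rw [if_pos hc]
      have h1 : G s₀ = t₀ := by
        have := congrFun hc s₀
        simp only [if_pos rfl] at this
        exact this.symm
      have h2 : ∀ s, s ≠ s₀ → h s = G s := by
        intro s hs
        have := congrFun hc s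
        simpa [hs] using this
      apply Finset.prod_congr rfl
      intro s _
      by_cases hss : s = s₀
      · subst hss; simp [hd, h1]
      · simp [hd, hss, h2 s hss]
    · rw [if_neg hc]
      by_cases h1 : G s₀ = t₀
      · have hex : ∃ s, s ≠ s₀ ∧ h s ≠ G s := by
          by_contra hall
          push_neg at hall
          apply hc
          funext s
          by_cases hss : s = s₀
          · subst hss; simp [h1.symm]
          · simp [hss, hall s hss]
        obtain ⟨s₁, hs₁, hne⟩ := hex
        symm
        apply Finset.prod_eq_zero (Finset.mem_univ s₁)
        simp [hd, hs₁, hne]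
      · symm
        apply Finset.prod_eq_zero (Finset.mem_univ s₀)
        simp [hd, h1]
  rw [Finset.sum_congr rfl fun h _ => hterm h, sum_pi_prod]
  by_cases h1 : G s₀ = t₀
  · rw [if_pos h1]
    apply Finset.prod_congr rfl
    intro s _
    by_cases hss : s = s₀
    · subst hss; simp [hd, h1]
    · simp [hd, hss]
  · rw [if_neg h1]
    apply Finset.prod_eq_zero (Finset.mem_univ s₀)
    simp [hd, h1]

omit [Fintype 𝒯] in
lemma prod_split_at [DecidableEq 𝒮] (c : 𝒮 → 𝒯 → ℝ≥0∞) (s₀ : 𝒮) (G : 𝒮 → 𝒯) :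
    c s₀ (G s₀) * ∏ s : 𝒮, (if s = s₀ then 1 else c s (G s)) = ∏ s : 𝒮, c s (G s) := by
  classical
  have hh : ∀ s : 𝒮, c s (G s)
      = (if s = s₀ then c s (G s) else 1) * (if s = s₀ then 1 else c s (G s)) := by
    intro s
    by_cases hss : s = s₀ <;> simp [hss]
  rw [Finset.prod_congr rfl fun s _ => hh s, Finset.prod_mul_distrib]
  congr 1
  exact (Fintype.prod_ite_eq' s₀ fun s => c s (G s)).symm

lemma sum_ite_eq_gen {α β : Type*} [Fintype α] [AddCommMonoid β] (a : α) (f : α → β)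
    {D : ∀ x : α, Decidable (x = a)} :
    (∑ x : α, (@ite _ (x = a) (D x) (f x) 0)) = f a := by
  rw [Finset.sum_eq_single a (fun x _ hx => if_neg hx)
    (fun ha => absurd (Finset.mem_univ a) ha)]
  exact if_pos rfl

lemma sum_ite_eq_gen' {α β : Type*} [Fintype α] [AddCommMonoid β] (a : α) (f : α → β)
    {D : ∀ x : α, Decidable (a = x)} :
    (∑ x : α, (@ite _ (a = x) (D x) (f x) 0)) = f a := by
  rw [Finset.sum_eq_single a (fun x _ hx => if_neg fun h => hx h.symm)
    (fun ha => absurd (Finset.mem_univ a) ha)]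
  exact if_pos rfl

end PiLemmas

set_option maxHeartbeats 2000000 in
/-- equality part of Theorem 2: there is an extension carrying `Y` with
`I(Y;S') = 0`, `H(T'|Y,S') = 0`, `I(X';Y|S',T') ≤ H(X|S,T)` and
`I(Y;T'|S') = H(T|S)`. -/
theorem theorem2_equality_part
    {Ω 𝒮 𝒳 𝒯 : Type*} [MeasurableSpace Ω]
    [Fintype 𝒮] [MeasurableSpace 𝒮] [DiscreteMeasurableSpace 𝒮]
    [Fintype 𝒳] [MeasurableSpace 𝒳] [DiscreteMeasurableSpace 𝒳]
    [Fintype 𝒯] [MeasurableSpace 𝒯] [DiscreteMeasurableSpace 𝒯]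
    (μ : Measure Ω) [IsProbabilityMeasure μ]
    (S : Ω → 𝒮) (X : Ω → 𝒳) (T : Ω → 𝒯)
    (hS : Measurable S) (hX : Measurable X) (hT : Measurable T) :
    ∃ (Ω' : Type) (_ : MeasurableSpace Ω') (μ' : Measure Ω') (n : ℕ)
      (S' : Ω' → 𝒮) (X' : Ω' → 𝒳) (T' : Ω' → 𝒯) (Y : Ω' → Fin n),
      IsProbabilityMeasure μ' ∧
      Measurable S' ∧ Measurable X' ∧ Measurable T' ∧ Measurable Y ∧
      μ'.map (fun ω => (S' ω, X' ω, T' ω)) = μ.map (fun ω => (S ω, X ω, T ω)) ∧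
      mutInf μ' Y S' = 0 ∧
      condEntH μ' T' (fun ω => (Y ω, S' ω)) = 0 ∧
      condMutInf μ' X' Y (fun ω => (S' ω, T' ω)) ≤
        condEntH μ X (fun ω => (S ω, T ω)) ∧
      condMutInf μ' Y T' S' = condEntH μ T S := by
  classical
  -- Ω and hence 𝒯 are nonempty
  have hΩ : Nonempty Ω := by
    by_contra h
    rw [not_nonempty_iff] at h
    have h1 : μ Set.univ = 1 := measure_univ
    rw [Set.univ_eq_empty_iff.mpr h] at h1
    simp at h1
  obtain ⟨ω₀⟩ := hΩ
  set t0 : 𝒯 := T ω₀ with ht0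
  set V : Ω → 𝒮 × 𝒳 × 𝒯 := fun ω => (S ω, X ω, T ω) with hV
  have hVm : Measurable V := hS.prodMk (hX.prodMk hT)
  set q : 𝒮 × 𝒳 × 𝒯 → ℝ≥0∞ := fun v => μ (V ⁻¹' {v}) with hq
  have hq1 : ∑ v, q v = 1 := by
    have h1 := measure_eq_sum_fiber (μ := μ) hVm MeasurableSet.univ
    simp only [Set.univ_inter, measure_univ] at h1
    exact h1.symm
  set qST : 𝒮 → 𝒯 → ℝ≥0∞ := fun s t => ∑ x, q (s, x, t) with hqST
  set qS : 𝒮 → ℝ≥0∞ := fun s => ∑ t, qST s t with hqS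
  have hsplit : ∀ s : 𝒮, ∑ p : 𝒳 × 𝒯, q (s, p) = qS s := by
    intro s
    rw [Fintype.sum_prod_type, Finset.sum_comm]
  have hqS1 : ∑ s, qS s = 1 := by
    rw [← hq1, Fintype.sum_prod_type]
    exact Finset.sum_congr rfl fun s _ => (hsplit s).symm
  have hqS_ne_top : ∀ s, qS s ≠ ⊤ := by
    intro s
    have hle : qS s ≤ 1 := by
      rw [← hqS1]
      exact Finset.single_le_sum (f := qS) (fun _ _ => zero_le) (Finset.mem_univ s)
    exact ne_top_of_le_ne_top ENNReal.one_ne_top hle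
  have hqST_le : ∀ s t, qST s t ≤ qS s := by
    intro s t
    exact Finset.single_le_sum (f := fun t => qST s t) (fun _ _ => zero_le) (Finset.mem_univ t)
  set c : 𝒮 → 𝒯 → ℝ≥0∞ :=
    fun s t => if qS s = 0 then (if t = t0 then 1 else 0) else qST s t / qS s with hc
  have hc_sum : ∀ s, ∑ t, c s t = 1 := by
    intro s
    by_cases h : qS s = 0
    · simp [hc, h]
    · simp only [hc, if_neg h, div_eq_mul_inv]
      rw [← Finset.sum_mul]
      exact ENNReal.mul_inv_cancel h (hqS_ne_top s)
  have hc_mul : ∀ s t, qS s * c s t = qST s t := by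
    intro s t
    by_cases h : qS s = 0
    · have h2 : qST s t = 0 := le_antisymm (h ▸ hqST_le s t) zero_le
      simp [h, h2]
    · simp only [hc, if_neg h, div_eq_mul_inv]
      rw [mul_comm (qST s t) _, ← mul_assoc, ENNReal.mul_inv_cancel h (hqS_ne_top s), one_mul]
  set Cp : (𝒮 → 𝒯) → ℝ≥0∞ := fun G => ∏ s, c s (G s) with hCp
  have hCp_sum : ∑ h : 𝒮 → 𝒯, Cp h = 1 := by
    simp only [hCp]
    rw [sum_pi_prod c, Finset.prod_congr rfl fun s _ => hc_sum s]
    exact Finset.prod_const_one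
  set R : 𝒮 → (𝒮 → 𝒯) → ℝ≥0∞ :=
    fun s₀ G => ∏ s, (if s = s₀ then 1 else c s (G s)) with hR
  have hconstr : ∀ (s₀ : 𝒮) (t₀' : 𝒯) (G : 𝒮 → 𝒯),
      ∑ h : 𝒮 → 𝒯, (if (fun s => if s = s₀ then t₀' else h s) = G then Cp h else 0)
        = if G s₀ = t₀' then R s₀ G else 0 := by
    intro s₀ t₀' G
    simp only [hCp, hR]
    rw [sum_pi_prod_constrained c s₀ t₀' G, hc_sum s₀]
  have hRC : ∀ (s₀ : 𝒮) (G : 𝒮 → 𝒯), c s₀ (G s₀) * R s₀ G = Cp G :=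
    fun s₀ G => prod_split_at c s₀ G
  -- the enlarged space
  set eA : Fin (Fintype.card (𝒮 × 𝒳 × 𝒯)) ≃ 𝒮 × 𝒳 × 𝒯 := (Fintype.equivFin _).symm with heA
  set eU : Fin (Fintype.card (𝒮 → 𝒯)) ≃ (𝒮 → 𝒯) := (Fintype.equivFin _).symm with heU
  set w : Fin (Fintype.card (𝒮 × 𝒳 × 𝒯)) × Fin (Fintype.card (𝒮 → 𝒯)) → ℝ≥0∞ :=
    fun p => q (eA p.1) * Cp (eU p.2) with hwdef
  have hw1 : ∑ p, w p = 1 := by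
    rw [Fintype.sum_prod_type]
    have hinner : ∀ k, ∑ j, w (k, j) = q (eA k) := by
      intro k
      simp only [hwdef]
      rw [← Finset.mul_sum, Equiv.sum_comp eU Cp, hCp_sum, mul_one]
    rw [Finset.sum_congr rfl fun k _ => hinner k, Equiv.sum_comp eA q, hq1]
  set pm : PMF (Fin (Fintype.card (𝒮 × 𝒳 × 𝒯)) × Fin (Fintype.card (𝒮 → 𝒯))) :=
    PMF.ofFintype w hw1 with hpm
  set μ' : Measure (Fin (Fintype.card (𝒮 × 𝒳 × 𝒯)) × Fin (Fintype.card (𝒮 → 𝒯))) :=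
    pm.toMeasure with hμ'
  haveI hμprob : IsProbabilityMeasure μ' := by rw [hμ']; infer_instance
  set S' : Fin (Fintype.card (𝒮 × 𝒳 × 𝒯)) × Fin (Fintype.card (𝒮 → 𝒯)) → 𝒮 :=
    fun p => (eA p.1).1 with hS'
  set X' : Fin (Fintype.card (𝒮 × 𝒳 × 𝒯)) × Fin (Fintype.card (𝒮 → 𝒯)) → 𝒳 :=
    fun p => (eA p.1).2.1 with hX'
  set T' : Fin (Fintype.card (𝒮 × 𝒳 × 𝒯)) × Fin (Fintype.card (𝒮 → 𝒯)) → 𝒯 :=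
    fun p => (eA p.1).2.2 with hT'
  set Y : Fin (Fintype.card (𝒮 × 𝒳 × 𝒯)) × Fin (Fintype.card (𝒮 → 𝒯))
      → Fin (Fintype.card (𝒮 → 𝒯)) :=
    fun p => eU.symm (fun s => if s = S' p then T' p else eU p.2 s) with hYdef
  -- master formula for events
  have hEv : ∀ E : Set (Fin (Fintype.card (𝒮 × 𝒳 × 𝒯)) × Fin (Fintype.card (𝒮 → 𝒯))),
      μ' E = ∑ v : 𝒮 × 𝒳 × 𝒯, ∑ h : 𝒮 → 𝒯,
        (if (eA.symm v, eU.symm h) ∈ E then q v * Cp h else 0) := by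
    intro E
    rw [hμ', PMF.toMeasure_apply_fintype, Fintype.sum_prod_type]
    have hterm : ∀ (v : 𝒮 × 𝒳 × 𝒯) (h : 𝒮 → 𝒯),
        (if (eA.symm v, eU.symm h) ∈ E then q v * Cp h else 0)
          = E.indicator pm (eA.symm v, eU.symm h) := by
      intro v h
      rw [Set.indicator_apply]
      by_cases hm : (eA.symm v, eU.symm h) ∈ E
      · rw [if_pos hm, if_pos hm, hpm]
        simp [PMF.ofFintype_apply, hwdef]
      · rw [if_neg hm, if_neg hm]
    rw [Finset.sum_congr rfl fun v _ => Finset.sum_congr rfl fun h _ => hterm v h]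
    rw [Finset.sum_congr rfl fun v (_ : v ∈ Finset.univ) =>
      Equiv.sum_comp eU.symm (fun j => E.indicator pm (eA.symm v, j))]
    exact (Equiv.sum_comp eA.symm (fun k => ∑ j, E.indicator pm (k, j))).symm
  -- events with Y
  have hEvY : ∀ (π : 𝒮 × 𝒳 × 𝒯 → Prop) (g : Fin (Fintype.card (𝒮 → 𝒯)))
      (D : ∀ v : 𝒮 × 𝒳 × 𝒯, Decidable (π v ∧ eU g v.1 = v.2.2)),
      μ' {p | π (eA p.1) ∧ Y p = g}
        = ∑ v : 𝒮 × 𝒳 × 𝒯,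
            (@ite _ (π v ∧ eU g v.1 = v.2.2) (D v) (q v * R v.1 (eU g)) 0) := by
    intro π g D
    rw [hEv]
    apply Finset.sum_congr rfl
    intro v _
    have hYv : ∀ h : 𝒮 → 𝒯, Y (eA.symm v, eU.symm h)
        = eU.symm (fun s => if s = v.1 then v.2.2 else h s) := by
      intro h
      simp [hYdef, hS', hT']
    have hmem : ∀ h : 𝒮 → 𝒯, ((eA.symm v, eU.symm h) ∈ {p | π (eA p.1) ∧ Y p = g})
        ↔ (π v ∧ (fun s => if s = v.1 then v.2.2 else h s) = eU g) := by
      intro h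
      simp only [Set.mem_setOf_eq, hYv h, Equiv.apply_symm_apply, Equiv.symm_apply_eq]
    trans (∑ h : 𝒮 → 𝒯, if π v ∧ (fun s => if s = v.1 then v.2.2 else h s) = eU g
        then q v * Cp h else 0)
    · exact Finset.sum_congr rfl fun h _ => by simp only [hmem h]
    by_cases hπ : π v
    · simp only [hπ, true_and]
      calc ∑ h : 𝒮 → 𝒯, (if (fun s => if s = v.1 then v.2.2 else h s) = eU g
              then q v * Cp h else 0)
          = q v * ∑ h : 𝒮 → 𝒯, (if (fun s => if s = v.1 then v.2.2 else h s) = eU g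
              then Cp h else 0) := by
            rw [Finset.mul_sum]
            apply Finset.sum_congr rfl
            intro h _
            by_cases hcnd : (fun s => if s = v.1 then v.2.2 else h s) = eU g <;>
              simp [hcnd]
        _ = if eU g v.1 = v.2.2 then q v * R v.1 (eU g) else 0 := by
            rw [hconstr v.1 v.2.2 (eU g)]
            by_cases h2 : eU g v.1 = v.2.2 <;> simp [h2]
    · simp [hπ]
  -- events without Y
  have hEv0 : ∀ (π : 𝒮 × 𝒳 × 𝒯 → Prop) (D : ∀ v, Decidable (π v)),
      μ' {p | π (eA p.1)} = ∑ v : 𝒮 × 𝒳 × 𝒯, (@ite _ (π v) (D v) (q v) 0) := by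
    intro π D
    rw [hEv]
    apply Finset.sum_congr rfl
    intro v _
    simp only [Set.mem_setOf_eq, Equiv.apply_symm_apply]
    by_cases hπ : π v
    · simp only [hπ, if_true]
      rw [← Finset.mul_sum, hCp_sum, mul_one]
    · simp [hπ]
  -- event values
  have W1 : ∀ v₀ : 𝒮 × 𝒳 × 𝒯,
      μ' ((fun p => (S' p, X' p, T' p)) ⁻¹' {v₀}) = q v₀ := by
    intro v₀
    have hset : (fun p => (S' p, X' p, T' p)) ⁻¹' {v₀} = {p | (eA p.1 = v₀)} := by
      ext p
      simp [hS', hX', hT', Prod.ext_iff]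
    rw [hset, hEv0 (fun v => v = v₀) (fun v => inferInstance)]
    exact sum_ite_eq_gen v₀ q
  have W2 : ∀ (g : Fin (Fintype.card (𝒮 → 𝒯))) (s : 𝒮),
      μ' ((fun p => (Y p, S' p)) ⁻¹' {(g, s)}) = qS s * Cp (eU g) := by
    intro g s
    have hset : (fun p => (Y p, S' p)) ⁻¹' {(g, s)}
        = {p | (fun v : 𝒮 × 𝒳 × 𝒯 => v.1 = s) (eA p.1) ∧ Y p = g} := by
      ext p
      simp only [Set.mem_preimage, Set.mem_singleton_iff, Prod.ext_iff, Set.mem_setOf_eq,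
        hS']
      tauto
    rw [hset, hEvY (fun v => v.1 = s) g (fun v => inferInstance)]
    rw [Fintype.sum_prod_type]
    have hper : ∀ s₁ : 𝒮, ∑ vp : 𝒳 × 𝒯,
        (if s₁ = s ∧ eU g s₁ = vp.2 then q (s₁, vp) * R s₁ (eU g) else 0)
        = if s₁ = s then qST s₁ (eU g s₁) * R s₁ (eU g) else 0 := by
      intro s₁
      by_cases hs : s₁ = s
      · simp only [hs, true_and, if_true]
        rw [Fintype.sum_prod_type]
        have hin : ∀ x : 𝒳, ∑ t : 𝒯, (if eU g s = t then q (s, x, t) * R s (eU g) else 0)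
            = q (s, x, eU g s) * R s (eU g) := by
          intro x
          exact sum_ite_eq_gen' (eU g s) (fun t => q (s, x, t) * R s (eU g))
        rw [Finset.sum_congr rfl fun x _ => hin x, ← Finset.sum_mul]
      · simp [hs]
    rw [Finset.sum_congr rfl fun s₁ _ => hper s₁,
      sum_ite_eq_gen s (fun s₁ => qST s₁ (eU g s₁) * R s₁ (eU g))]
    rw [← hc_mul s (eU g s), mul_assoc, hRC s (eU g)]
  have W3 : ∀ g : Fin (Fintype.card (𝒮 → 𝒯)), μ' (Y ⁻¹' {g}) = Cp (eU g) := by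
    intro g
    have hset : Y ⁻¹' {g} = {p | (fun _ : 𝒮 × 𝒳 × 𝒯 => True) (eA p.1) ∧ Y p = g} := by
      ext p; simp
    rw [hset, hEvY (fun _ => True) g (fun v => inferInstance)]
    simp only [true_and]
    rw [Fintype.sum_prod_type]
    have hper : ∀ s₁ : 𝒮, ∑ vp : 𝒳 × 𝒯,
        (if eU g s₁ = vp.2 then q (s₁, vp) * R s₁ (eU g) else 0)
        = qS s₁ * Cp (eU g) := by
      intro s₁
      rw [Fintype.sum_prod_type]
      have hin : ∀ x : 𝒳, ∑ t : 𝒯, (if eU g s₁ = t then q (s₁, x, t) * R s₁ (eU g) else 0)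
          = q (s₁, x, eU g s₁) * R s₁ (eU g) := by
        intro x
        exact sum_ite_eq_gen' (eU g s₁) (fun t => q (s₁, x, t) * R s₁ (eU g))
      rw [Finset.sum_congr rfl fun x _ => hin x, ← Finset.sum_mul,
        show (∑ x : 𝒳, q (s₁, x, eU g s₁)) = qST s₁ (eU g s₁) from rfl,
        ← hc_mul s₁ (eU g s₁), mul_assoc, hRC s₁ (eU g)]
    rw [Finset.sum_congr rfl fun s₁ _ => hper s₁, ← Finset.sum_mul, hqS1, one_mul]
  have W4 : ∀ s : 𝒮, μ' (S' ⁻¹' {s}) = qS s := by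
    intro s
    have hset : S' ⁻¹' {s} = {p | (fun v : 𝒮 × 𝒳 × 𝒯 => v.1 = s) (eA p.1)} := by
      ext p; simp [hS']
    rw [hset, hEv0 (fun v => v.1 = s) (fun v => inferInstance)]
    rw [Fintype.sum_prod_type]
    have hper : ∀ s₁ : 𝒮, ∑ vp : 𝒳 × 𝒯, (if s₁ = s then q (s₁, vp) else 0)
        = if s₁ = s then qS s₁ else 0 := by
      intro s₁
      by_cases hs : s₁ = s
      · simp only [hs, if_true]
        exact hsplit s
      · simp [hs]
    rw [Finset.sum_congr rfl fun s₁ _ => hper s₁, sum_ite_eq_gen s (fun s₁ => qS s₁)]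
  have W5 : ∀ (s : 𝒮) (t : 𝒯),
      μ' ((fun p => (S' p, T' p)) ⁻¹' {(s, t)}) = qST s t := by
    intro s t
    have hset : (fun p => (S' p, T' p)) ⁻¹' {(s, t)}
        = {p | (fun v : 𝒮 × 𝒳 × 𝒯 => v.1 = s ∧ v.2.2 = t) (eA p.1)} := by
      ext p; simp [hS', hT', Prod.ext_iff]
    rw [hset, hEv0 (fun v => v.1 = s ∧ v.2.2 = t) (fun v => inferInstance)]
    rw [Fintype.sum_prod_type]
    have hper : ∀ s₁ : 𝒮, ∑ vp : 𝒳 × 𝒯, (if s₁ = s ∧ vp.2 = t then q (s₁, vp) else 0)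
        = if s₁ = s then qST s₁ t else 0 := by
      intro s₁
      by_cases hs : s₁ = s
      · simp only [hs, true_and, if_true]
        rw [Fintype.sum_prod_type]
        have hin : ∀ x : 𝒳, ∑ t₁ : 𝒯, (if t₁ = t then q (s, x, t₁) else 0) = q (s, x, t) := by
          intro x
          exact sum_ite_eq_gen t (fun t₁ => q (s, x, t₁))
        rw [Finset.sum_congr rfl fun x _ => hin x]
      · simp [hs]
    rw [Finset.sum_congr rfl fun s₁ _ => hper s₁, sum_ite_eq_gen s (fun s₁ => qST s₁ t)]
  have W6 : ∀ (x : 𝒳) (z : 𝒮 × 𝒯),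
      μ' ((fun p => (X' p, (S' p, T' p))) ⁻¹' {(x, z)}) = q (z.1, x, z.2) := by
    intro x z
    have hset : (fun p => (X' p, (S' p, T' p))) ⁻¹' {(x, z)}
        = {p | (fun v : 𝒮 × 𝒳 × 𝒯 => v = (z.1, x, z.2)) (eA p.1)} := by
      ext p; simp [hS', hX', hT', Prod.ext_iff]; tauto
    rw [hset, hEv0 (fun v => v = (z.1, x, z.2)) (fun v => inferInstance)]
    exact sum_ite_eq_gen (z.1, x, z.2) q
  have W7 : ∀ (g : Fin (Fintype.card (𝒮 → 𝒯))) (z : 𝒮 × 𝒯),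
      μ' ((fun p => (Y p, (S' p, T' p))) ⁻¹' {(g, z)})
        = if eU g z.1 = z.2 then qST z.1 z.2 * R z.1 (eU g) else 0 := by
    intro g z
    have hset : (fun p => (Y p, (S' p, T' p))) ⁻¹' {(g, z)}
        = {p | (fun v : 𝒮 × 𝒳 × 𝒯 => v.1 = z.1 ∧ v.2.2 = z.2) (eA p.1) ∧ Y p = g} := by
      ext p; simp [hS', hT', Prod.ext_iff]; tauto
    rw [hset, hEvY (fun v => v.1 = z.1 ∧ v.2.2 = z.2) g (fun v => inferInstance)]
    rw [Fintype.sum_prod_type]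
    have hper : ∀ s₁ : 𝒮, ∑ vp : 𝒳 × 𝒯,
        (if (s₁ = z.1 ∧ vp.2 = z.2) ∧ eU g s₁ = vp.2 then q (s₁, vp) * R s₁ (eU g) else 0)
        = if s₁ = z.1 then (if eU g z.1 = z.2 then qST z.1 z.2 * R z.1 (eU g) else 0) else 0 := by
      intro s₁
      by_cases hs : s₁ = z.1
      · rw [if_pos hs]
        by_cases h2 : eU g z.1 = z.2
        · rw [if_pos h2]
          have hcnd : ∀ vp : 𝒳 × 𝒯,
              ((s₁ = z.1 ∧ vp.2 = z.2) ∧ eU g s₁ = vp.2) ↔ vp.2 = z.2 := by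
            intro vp
            constructor
            · rintro ⟨⟨-, h3⟩, -⟩; exact h3
            · intro h3; exact ⟨⟨hs, h3⟩, by rw [hs, h2, h3]⟩
          trans (∑ vp : 𝒳 × 𝒯, (if vp.2 = z.2 then q (s₁, vp) * R s₁ (eU g) else 0))
          · exact Finset.sum_congr rfl fun vp _ => by simp only [hcnd vp]
          rw [Fintype.sum_prod_type]
          have hin : ∀ x₁ : 𝒳, ∑ t₁ : 𝒯,
              (if t₁ = z.2 then q (s₁, x₁, t₁) * R s₁ (eU g) else 0)
              = q (s₁, x₁, z.2) * R s₁ (eU g) := by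
            intro x₁
            exact sum_ite_eq_gen z.2 (fun t₁ => q (s₁, x₁, t₁) * R s₁ (eU g))
          rw [Finset.sum_congr rfl fun x₁ _ => hin x₁, ← Finset.sum_mul, hs]
        · rw [if_neg h2]
          apply Finset.sum_eq_zero
          intro vp _
          apply if_neg
          rintro ⟨⟨h4, h5⟩, h6⟩
          exact h2 (by rw [← h4, h6, h5])
      · rw [if_neg hs]
        apply Finset.sum_eq_zero
        intro vp _
        exact if_neg (fun hc => hs hc.1.1)
    rw [Finset.sum_congr rfl fun s₁ _ => hper s₁,
      sum_ite_eq_gen z.1 (fun _ => if eU g z.1 = z.2 then qST z.1 z.2 * R z.1 (eU g) else 0)]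
  have W8 : ∀ (x : 𝒳) (g : Fin (Fintype.card (𝒮 → 𝒯))) (z : 𝒮 × 𝒯),
      μ' ((fun p => (X' p, Y p, (S' p, T' p))) ⁻¹' {(x, g, z)})
        = if eU g z.1 = z.2 then q (z.1, x, z.2) * R z.1 (eU g) else 0 := by
    intro x g z
    have hset : (fun p => (X' p, Y p, (S' p, T' p))) ⁻¹' {(x, g, z)}
        = {p | (fun v : 𝒮 × 𝒳 × 𝒯 => v = (z.1, x, z.2)) (eA p.1) ∧ Y p = g} := by
      ext p; simp [hS', hX', hT', Prod.ext_iff]; tauto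
    rw [hset, hEvY (fun v => v = (z.1, x, z.2)) g (fun v => inferInstance)]
    by_cases h2 : eU g z.1 = z.2
    · rw [if_pos h2]
      have hcnd : ∀ v : 𝒮 × 𝒳 × 𝒯,
          (v = (z.1, x, z.2) ∧ eU g v.1 = v.2.2) ↔ v = (z.1, x, z.2) := by
        intro v
        constructor
        · exact And.left
        · intro h4
          refine ⟨h4, ?_⟩
          rw [h4]
          exact h2
      trans (∑ v : 𝒮 × 𝒳 × 𝒯, (if v = (z.1, x, z.2) then q v * R v.1 (eU g) else 0))
      · exact Finset.sum_congr rfl fun v _ => by simp only [hcnd v]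
      exact sum_ite_eq_gen (z.1, x, z.2) (fun v => q v * R v.1 (eU g))
    · rw [if_neg h2]
      apply Finset.sum_eq_zero
      intro v _
      apply if_neg
      rintro ⟨h4, h5⟩
      rw [h4] at h5
      exact h2 h5
  -- measurability on the discrete product space
  have hYm : Measurable Y := Measurable.of_discrete
  have hS'm : Measurable S' := Measurable.of_discrete
  have hX'm : Measurable X' := Measurable.of_discrete
  have hT'm : Measurable T' := Measurable.of_discrete
  have htrip : Measurable (fun p => (S' p, X' p, T' p)) := Measurable.of_discrete
  -- the joint distribution is preserved
  have hmap : μ'.map (fun p => (S' p, X' p, T' p)) = μ.map V := by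
    apply MeasureTheory.Measure.ext_of_singleton
    intro v
    rw [Measure.map_apply htrip (measurableSet_singleton v),
      Measure.map_apply hVm (measurableSet_singleton v)]
    exact W1 v
  -- Y is independent of S'
  have hmut : mutInf μ' Y S' = 0 := by
    have hind := entH_add_of_indep (μ := μ') hYm hS'm (fun g s => by
      rw [W2 g s, W3 g, W4 s]; ring)
    simp only [mutInf]
    rw [hind]
    ring
  -- T' is a function of (Y, S')
  have hT'eq : ∀ p, T' p = eU (Y p) (S' p) := by
    intro p
    rw [hYdef]
    simp
  have hcond0 : condEntH μ' T' (fun ω => (Y ω, S' ω)) = 0 := by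
    simp only [condEntH]
    rw [sub_eq_zero]
    have hfn : (fun p => (T' p, (Y p, S' p)))
        = fun p => ((fun z : Fin (Fintype.card (𝒮 → 𝒯)) × 𝒮 => (eU z.1 z.2, z))
            ((fun p => (Y p, S' p)) p)) := by
      funext p
      simp [hT'eq p]
    rw [hfn]
    exact entH_comp_inj
      (f := fun z : Fin (Fintype.card (𝒮 → 𝒯)) × 𝒮 => (eU z.1 z.2, z))
      (fun a b hab => congrArg Prod.snd hab) (fun p => (Y p, S' p))
  -- conditional independence of X' and Y given (S', T')
  have hci : condMutInf μ' X' Y (fun ω => (S' ω, T' ω)) = 0 := by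
    have hfact : ∀ (a : 𝒳) (b : Fin (Fintype.card (𝒮 → 𝒯))) (z : 𝒮 × 𝒯),
        μ' ((fun p => (X' p, Y p, (S' p, T' p))) ⁻¹' {(a, b, z)})
            * μ' ((fun p => (S' p, T' p)) ⁻¹' {z})
          = μ' ((fun p => (X' p, (S' p, T' p))) ⁻¹' {(a, z)})
            * μ' ((fun p => (Y p, (S' p, T' p))) ⁻¹' {(b, z)}) := by
      intro a b z
      obtain ⟨zs, zt⟩ := z
      rw [W8 a b (zs, zt), W5 zs zt, W6 a (zs, zt), W7 b (zs, zt)]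
      by_cases h2 : eU b (zs, zt).1 = (zs, zt).2
      · simp only [h2, if_true]
        ring
      · simp only [h2, if_false]
        ring
    have hmain := entH_condIndep (μ := μ') hX'm hYm
      (Measurable.of_discrete (f := fun p => (S' p, T' p))) hfact
    simp only [condMutInf, condEntH]
    have hre : entH μ' (fun p => ((X' p, Y p), (S' p, T' p)))
        = entH μ' (fun p => (X' p, Y p, (S' p, T' p))) := by
      have hfn : (fun p => ((X' p, Y p), (S' p, T' p)))
          = fun p => ((fun z : 𝒳 × Fin (Fintype.card (𝒮 → 𝒯)) × 𝒮 × 𝒯 =>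
              ((z.1, z.2.1), z.2.2)) ((fun p => (X' p, Y p, (S' p, T' p))) p)) := rfl
      rw [hfn]
      refine entH_comp_inj
        (f := fun z : 𝒳 × Fin (Fintype.card (𝒮 → 𝒯)) × 𝒮 × 𝒯 => ((z.1, z.2.1), z.2.2))
        ?_ (fun p => (X' p, Y p, (S' p, T' p)))
      intro u1 u2 huv
      have e1 : u1.1 = u2.1 := congrArg (fun w => w.1.1) huv
      have e2 : u1.2.1 = u2.2.1 := congrArg (fun w => w.1.2) huv
      have e3 : u1.2.2 = u2.2.2 := congrArg (fun w => w.2) huv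
      exact Prod.ext e1 (Prod.ext e2 e3)
    rw [hre]
    linarith [hmain]
  have hrhs : 0 ≤ condEntH μ X (fun ω => (S ω, T ω)) := by
    simp only [condEntH]
    rw [sub_nonneg]
    exact entH_le_pair hX (hS.prodMk hT)
  -- I(Y ; T' | S') = H(T|S)
  have hfinal : condMutInf μ' Y T' S' = condEntH μ T S := by
    simp only [condMutInf, condEntH]
    have h1 : entH μ' (fun p => ((Y p, T' p), S' p)) = entH μ' (fun p => (Y p, S' p)) := by
      have hfn : (fun p => ((Y p, T' p), S' p))
          = fun p => ((fun z : Fin (Fintype.card (𝒮 → 𝒯)) × 𝒮 => ((z.1, eU z.1 z.2), z.2))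
              ((fun p => (Y p, S' p)) p)) := by
        funext p
        simp [hT'eq p]
      rw [hfn]
      refine entH_comp_inj
        (f := fun z : Fin (Fintype.card (𝒮 → 𝒯)) × 𝒮 => ((z.1, eU z.1 z.2), z.2))
        ?_ (fun p => (Y p, S' p))
      intro u1 u2 huv
      have e1 : u1.1 = u2.1 := congrArg (fun w => w.1.1) huv
      have e2 : u1.2 = u2.2 := congrArg (fun w => w.2) huv
      exact Prod.ext e1 e2
    have hπm : Measurable (fun v : 𝒮 × 𝒳 × 𝒯 => (v.2.2, v.1)) := Measurable.of_discrete
    have hmapTS : μ'.map (fun p => (T' p, S' p)) = μ.map (fun ω => (T ω, S ω)) := by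
      have e1 : μ'.map (fun p => (T' p, S' p))
          = (μ'.map (fun p => (S' p, X' p, T' p))).map (fun v : 𝒮 × 𝒳 × 𝒯 => (v.2.2, v.1)) := by
        rw [Measure.map_map hπm htrip]
        rfl
      have e2 : μ.map (fun ω => (T ω, S ω))
          = (μ.map V).map (fun v : 𝒮 × 𝒳 × 𝒯 => (v.2.2, v.1)) := by
        rw [Measure.map_map hπm hVm]
        rfl
      rw [e1, e2, hmap]
    have hπ1 : Measurable (fun v : 𝒮 × 𝒳 × 𝒯 => v.1) := Measurable.of_discrete
    have hmapS : μ'.map S' = μ.map S := by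
      have e1 : μ'.map S'
          = (μ'.map (fun p => (S' p, X' p, T' p))).map (fun v : 𝒮 × 𝒳 × 𝒯 => v.1) := by
        rw [Measure.map_map hπ1 htrip]
        rfl
      have e2 : μ.map S = (μ.map V).map (fun v : 𝒮 × 𝒳 × 𝒯 => v.1) := by
        rw [Measure.map_map hπ1 hVm]
        rfl
      rw [e1, e2, hmap]
    have h2 : entH μ' (fun p => (T' p, S' p)) = entH μ (fun ω => (T ω, S ω)) :=
      entH_map Measurable.of_discrete (hT.prodMk hS) hmapTS |>.symm |>.symm
    have h3 : entH μ' S' = entH μ S := entH_map Measurable.of_discrete hS hmapS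
    rw [h1, h2, h3]
    ring
  exact ⟨Fin (Fintype.card (𝒮 × 𝒳 × 𝒯)) × Fin (Fintype.card (𝒮 → 𝒯)), inferInstance, μ',
    Fintype.card (𝒮 → 𝒯), S', X', T', Y, hμprob, hS'm, hX'm, hT'm, hYm, hmap, hmut, hcond0,
    hci.le.trans hrhs, hfinal⟩
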